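/- arXiv:1804.00317 — 5 statements merged into one kernel-verified Lean document; each statement's English description precedes it below -/
import Mathlib

section
/- Let q, J be natural numbers, let L : ℤ × (ℝ^q)^{J+1} → ℝ be C¹ in its (ℝ^q)^{J+1}-arguments, and let u, w : ℤ → ℝ^q be sequences. Then for every n ∈ ℤ the pointwise identity Σ_{j=0}^{J} Σ_{α=1}^{q} w^α(n+j)·(∂L/∂u^α_j)(n, u(n),…,u(n+J)) = Σ_{α=1}^{q} w^α(n)·E_α(L)[u](n) + A[u,w](n+1) − A[u,w](n) holds, where E_α(L)[u] is the Euler–Lagrange expression and A[u,w] is the boundary term defined below. -/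
/-- Partial derivative of `L n` with respect to the `α`-th component of its `j`-th
`ℝ^q`-block. -/
noncomputable def pderivL (q J : ℕ) (L : ℤ → (Fin (J+1) → Fin q → ℝ) → ℝ)
    (n : ℤ) (z : Fin (J+1) → Fin q → ℝ) (j : Fin (J+1)) (α : Fin q) : ℝ :=
  fderiv ℝ (L n) z (Pi.single j (Pi.single α 1))

/-- The window `(u(n), u(n+1), …, u(n+J))` of a sequence `u : ℤ → ℝ^q`. -/
def windowL (q J : ℕ) (u : ℤ → Fin q → ℝ) (n : ℤ) : Fin (J+1) → Fin q → ℝ :=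
  fun j α => u (n + (j : ℕ)) α

/-- The Euler–Lagrange expression `E_α(L)[u](n) = Σ_j (∂L/∂u^α_j)(n-j, u(n-j),…,u(n-j+J))`. -/
noncomputable def ELexpr (q J : ℕ) (L : ℤ → (Fin (J+1) → Fin q → ℝ) → ℝ)
    (u : ℤ → Fin q → ℝ) (α : Fin q) (n : ℤ) : ℝ :=
  ∑ j : Fin (J+1), pderivL q J L (n - (j : ℕ)) (windowL q J u (n - (j : ℕ))) j α

/-- The boundary term
`A[u,w](n) = Σ_{j=1}^{J} Σ_{l=0}^{j-1} Σ_α w^α(n+l)·(∂L/∂u^α_j)(n+l-j, u(n+l-j),…)`. -/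
noncomputable def bdryTerm (q J : ℕ) (L : ℤ → (Fin (J+1) → Fin q → ℝ) → ℝ)
    (u w : ℤ → Fin q → ℝ) (n : ℤ) : ℝ :=
  ∑ j : Fin (J+1), ∑ l ∈ Finset.range (j : ℕ), ∑ α : Fin q,
    w (n + (l : ℕ)) α *
      pderivL q J L (n + (l : ℕ) - (j : ℕ)) (windowL q J u (n + (l : ℕ) - (j : ℕ))) j α

/-! The identity is pure bookkeeping: for each block `j`, put
`F_j(m) = Σ_α w^α(m) · (∂L/∂u^α_j)(m - j, u(m - j), …)`. The left side is `Σ_j F_j(n + j)`, the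
Euler–Lagrange term is `Σ_j F_j(n)`, and `A(n) = Σ_j Σ_{l<j} F_j(n + l)`, so `A(n+1) - A(n)`
telescopes to `Σ_j (F_j(n + j) - F_j(n))`. -/

theorem Finset.sum_range_int_succ_sub_sum_range {M : Type*} [AddCommGroup M] (F : ℤ → M)
    (n : ℤ) (j : ℕ) :
    ∑ l ∈ Finset.range j, F (n + 1 + l) - ∑ l ∈ Finset.range j, F (n + l) = F (n + j) - F n := by
  rw [← Finset.sum_sub_distrib]
  simpa [add_right_comm n 1, add_assoc] using
    Finset.sum_range_sub (fun l : ℕ => F (n + l)) j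

theorem summation_by_parts_identity_general (q J : ℕ)
    (L : ℤ → (Fin (J+1) → Fin q → ℝ) → ℝ)
    (u w : ℤ → Fin q → ℝ) (n : ℤ) :
    ∑ j : Fin (J+1), ∑ α : Fin q,
        w (n + (j : ℕ)) α * pderivL q J L n (windowL q J u n) j α
      = (∑ α : Fin q, w n α * ELexpr q J L u α n)
        + bdryTerm q J L u w (n + 1) - bdryTerm q J L u w n := by
  set F : Fin (J+1) → ℤ → ℝ := fun j m =>
    ∑ α : Fin q, w m α * pderivL q J L (m - (j : ℕ)) (windowL q J u (m - (j : ℕ))) j α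
  have hvariation : ∑ j : Fin (J+1), ∑ α : Fin q,
      w (n + (j : ℕ)) α * pderivL q J L n (windowL q J u n) j α = ∑ j, F j (n + (j : ℕ)) := by
    simp only [F, add_sub_cancel_right]
  have hEL : ∑ α : Fin q, w n α * ELexpr q J L u α n = ∑ j, F j n := by
    simp only [ELexpr, F, Finset.mul_sum]
    exact Finset.sum_comm
  have hbdry (m : ℤ) :
      bdryTerm q J L u w m = ∑ j : Fin (J+1), ∑ l ∈ Finset.range (j : ℕ), F j (m + l) := rfl
  rw [hvariation, hEL, hbdry, hbdry, add_sub_assoc, ← Finset.sum_sub_distrib,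
    ← Finset.sum_add_distrib]
  refine Finset.sum_congr rfl fun j _ => ?_
  rw [Finset.sum_range_int_succ_sub_sum_range]
  abel

/-- Pointwise summation-by-parts identity: the variation of the Lagrangian splits into the
Euler–Lagrange term plus a total difference of the boundary term. -/
theorem summation_by_parts_identity (q J : ℕ)
    (L : ℤ → (Fin (J+1) → Fin q → ℝ) → ℝ)
    (hL : ∀ n, ContDiff ℝ 1 (L n))
    (u w : ℤ → Fin q → ℝ) (n : ℤ) :
    ∑ j : Fin (J+1), ∑ α : Fin q,
        w (n + (j : ℕ)) α * pderivL q J L n (windowL q J u n) j α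
      = (∑ α : Fin q, w n α * ELexpr q J L u α n)
        + bdryTerm q J L u w (n + 1) - bdryTerm q J L u w n :=
  summation_by_parts_identity_general q J L u w n
end

section
/- Let q, J be natural numbers, let L : ℤ × (ℝ^q)^{J+1} → ℝ be C¹ in its (ℝ^q)^{J+1}-arguments, and let u : ℤ → ℝ^q. If for every finitely supported sequence w : ℤ → ℝ^q the total variation vanishes, i.e. Σ_{n∈ℤ} (d/dε)|_{ε=0} L(n, u(n)+εw(n), …, u(n+J)+εw(n+J)) = 0 (the sum has only finitely many nonzero terms), then u satisfies the Euler–Lagrange system: E_α(L)[u](n) = 0 for every n ∈ ℤ and every α = 1,…,q. -/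
/-!
Test the vanishing first variation against the unit variation `w = δ_{n₀} e_α`. The `n`-th
term is the derivative of `L n` at the window of `u` in the direction of the window of `w`;
that window vanishes unless `n = n₀ - j` for some `j ≤ J`, when it is `e_α` in block `j`.
So the total variation is exactly `E_α(L)[u](n₀)`.
-/

open Function

theorem finsum_eq_sum_fin_of_support_subset {M : Type*} [AddCommMonoid M] {J : ℕ}
    (f : ℤ → M) (n₀ : ℤ) (hf : support f ⊆ Set.range fun j : Fin (J+1) => n₀ - (j : ℕ)) :
    ∑ᶠ n, f n = ∑ j : Fin (J+1), f (n₀ - (j : ℕ)) := by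
  classical
  rw [finsum_eq_sum_of_support_subset f (s := Finset.univ.image fun j : Fin (J+1) => n₀ - (j : ℕ))
    (by simpa using hf), Finset.sum_image fun x _ y _ h => Fin.ext (by simpa using h)]

section windowL

variable {q J : ℕ}

theorem windowL_add_smul (u w : ℤ → Fin q → ℝ) (n : ℤ) (ε : ℝ) :
    (fun (j : Fin (J+1)) α => u (n + (j : ℕ)) α + ε * w (n + (j : ℕ)) α)
      = windowL q J u n + ε • windowL q J w n :=
  rfl

theorem windowL_single_sub (n₀ : ℤ) (e : Fin q → ℝ) (j : Fin (J+1)) :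
    windowL q J (Pi.single n₀ e) (n₀ - (j : ℕ)) = Pi.single j e := by
  funext i β
  by_cases h : i = j
  · subst h; simp [windowL]
  · have : n₀ - (j : ℕ) + (i : ℕ) ≠ n₀ := by
      have : (i : ℕ) ≠ j := Fin.val_ne_of_ne h
      omega
    simp [windowL, this, h]

theorem windowL_single_eq_zero {n₀ n : ℤ} (e : Fin q → ℝ)
    (hn : n ∉ Set.range fun j : Fin (J+1) => n₀ - (j : ℕ)) :
    windowL q J (Pi.single n₀ e) n = 0 := by
  funext j α
  have : n + (j : ℕ) ≠ n₀ := fun h => hn ⟨j, by dsimp only; omega⟩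
  simp [windowL, this]

end windowL

/-- If the total variation vanishes for every finitely supported variation `w`, then `u`
satisfies the Euler–Lagrange system. -/
theorem extremal_satisfies_euler_lagrange (q J : ℕ)
    (L : ℤ → (Fin (J+1) → Fin q → ℝ) → ℝ)
    (hL : ∀ n, ContDiff ℝ 1 (L n))
    (u : ℤ → Fin q → ℝ)
    (hvar : ∀ w : ℤ → Fin q → ℝ, (Function.support w).Finite →
      ∑ᶠ n : ℤ, deriv
        (fun ε : ℝ => L n (fun j α => u (n + (j : ℕ)) α + ε * w (n + (j : ℕ)) α)) 0 = 0) :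
    ∀ (n : ℤ) (α : Fin q), ELexpr q J L u α n = 0 := by
  intro n₀ α
  have hterm : ∀ n v, deriv (fun ε : ℝ => L n (windowL q J u n + ε • v)) 0
      = fderiv ℝ (L n) (windowL q J u n) v := fun n _ =>
    ((hL n).differentiable one_ne_zero _).lineDeriv_eq_fderiv
  have hsupp : support (fun n => fderiv ℝ (L n) (windowL q J u n)
      (windowL q J (Pi.single n₀ (Pi.single α 1)) n))
      ⊆ Set.range fun j : Fin (J+1) => n₀ - (j : ℕ) :=
    support_subset_iff'.2 fun n hn => by rw [windowL_single_eq_zero _ hn, map_zero]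
  have hfinite : (support (Pi.single n₀ (Pi.single α 1) : ℤ → Fin q → ℝ)).Finite :=
    (Set.finite_singleton n₀).subset Pi.support_single_subset
  simpa only [ELexpr, pderivL, windowL_add_smul, hterm,
    finsum_eq_sum_fin_of_support_subset _ n₀ hsupp, windowL_single_sub] using hvar _ hfinite
end

section
/- (Difference Noether's Theorem.) Let q, J be natural numbers, let L : ℤ × (ℝ^q)^{J+1} → ℝ be C¹ in its (ℝ^q)^{J+1}-arguments, let u : ℤ → ℝ^q, let φ : ℤ × ℝ^q → ℝ^q, and write φ_u(n) = φ(n, u(n)). Suppose there is a sequence B : ℤ → ℝ such that for all n ∈ ℤ, Σ_{j=0}^{J} Σ_{α=1}^{q} φ_u^α(n+j)·(∂L/∂u^α_j)(n, u(n),…,u(n+J)) = B(n+1) − B(n) (i.e. φ is a variational symmetry characteristic along u). If u solves the Euler–Lagrange system E_α(L)[u](n) = 0 for all n and α, then (A[u,φ_u] − B)(n+1) − (A[u,φ_u] − B)(n) = 0 for all n; equivalently there is a constant c with A[u,φ_u](n) − B(n) = c for all n (a first integral). -/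
theorem Finset.sum_range_int_shift_sub {M : Type*} [AddCommGroup M] (F : ℤ → M) (n : ℤ) (k : ℕ) :
    ∑ l ∈ Finset.range k, F (n + 1 + l) - ∑ l ∈ Finset.range k, F (n + l) = F (n + k) - F n := by
  rw [← Finset.sum_sub_distrib]
  convert Finset.sum_range_sub (fun l : ℕ => F (n + l)) k using 3 <;> push_cast <;> ring_nf

section BoundaryTerm

variable (q J : ℕ) (L : ℤ → (Fin (J+1) → Fin q → ℝ) → ℝ) (u w : ℤ → Fin q → ℝ) (n : ℤ)

theorem sum_mul_ELexpr :
    ∑ α : Fin q, w n α * ELexpr q J L u α n =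
      ∑ j : Fin (J+1), ∑ α : Fin q,
        w n α * pderivL q J L (n - (j : ℕ)) (windowL q J u (n - (j : ℕ))) j α := by
  simp only [ELexpr, Finset.mul_sum]
  exact Finset.sum_comm

theorem bdryTerm_succ_sub :
    bdryTerm q J L u w (n + 1) - bdryTerm q J L u w n =
      ∑ j : Fin (J+1), ∑ α : Fin q, w (n + (j : ℕ)) α * pderivL q J L n (windowL q J u n) j α
        - ∑ α : Fin q, w n α * ELexpr q J L u α n := by
  rw [sum_mul_ELexpr q J L u w n, ← Finset.sum_sub_distrib, bdryTerm, bdryTerm, ← Finset.sum_sub_distrib]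
  refine Finset.sum_congr rfl fun j _ => ?_
  simpa using Finset.sum_range_int_shift_sub
    (fun m => ∑ α : Fin q, w m α * pderivL q J L (m - (j : ℕ)) (windowL q J u (m - (j : ℕ))) j α) n j

end BoundaryTerm

theorem Int.eq_apply_zero_of_forall_sub_eq_zero {G : Type*} [AddGroup G] {f : ℤ → G}
    (h : ∀ n, f (n + 1) - f n = 0) (n : ℤ) :
    f n = f 0 := by
  have hper : Function.Periodic f 1 := fun n => sub_eq_zero.mp (h n)
  simpa using hper.int_mul_eq n

theorem difference_noether_general (q J : ℕ)
    (L : ℤ → (Fin (J+1) → Fin q → ℝ) → ℝ)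
    (u : ℤ → Fin q → ℝ)
    (φ : ℤ → (Fin q → ℝ) → (Fin q → ℝ))
    (B : ℤ → ℝ)
    (hsym : ∀ n : ℤ,
      ∑ j : Fin (J+1), ∑ α : Fin q,
        φ (n + (j : ℕ)) (u (n + (j : ℕ))) α * pderivL q J L n (windowL q J u n) j α
      = B (n + 1) - B n)
    (hEL : ∀ (n : ℤ) (α : Fin q), ELexpr q J L u α n = 0) :
    (∀ n : ℤ,
      (bdryTerm q J L u (fun m => φ m (u m)) (n + 1) - B (n + 1))
        - (bdryTerm q J L u (fun m => φ m (u m)) n - B n) = 0)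
    ∧ ∃ c : ℝ, ∀ n : ℤ, bdryTerm q J L u (fun m => φ m (u m)) n - B n = c := by
  set w : ℤ → Fin q → ℝ := fun m => φ m (u m)
  have hconserved : ∀ n : ℤ,
      (bdryTerm q J L u w (n + 1) - B (n + 1)) - (bdryTerm q J L u w n - B n) = 0 := by
    intro n
    rw [sub_sub_sub_comm, bdryTerm_succ_sub q J L u w n, hsym n]
    simp [hEL]
  exact ⟨hconserved, _, Int.eq_apply_zero_of_forall_sub_eq_zero hconserved⟩

/-- Difference Noether's Theorem: if `φ` is the characteristic of a variational symmetry of `L`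
along `u` (with divergence term `B`), and `u` solves the Euler–Lagrange system, then
`A[u,φ_u] − B` is a first integral. -/
theorem difference_noether (q J : ℕ)
    (L : ℤ → (Fin (J+1) → Fin q → ℝ) → ℝ)
    (hL : ∀ n, ContDiff ℝ 1 (L n))
    (u : ℤ → Fin q → ℝ)
    (φ : ℤ → (Fin q → ℝ) → (Fin q → ℝ))
    (B : ℤ → ℝ)
    (hsym : ∀ n : ℤ,
      ∑ j : Fin (J+1), ∑ α : Fin q,
        φ (n + (j : ℕ)) (u (n + (j : ℕ))) α * pderivL q J L n (windowL q J u n) j α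
      = B (n + 1) - B n)
    (hEL : ∀ (n : ℤ) (α : Fin q), ELexpr q J L u α n = 0) :
    (∀ n : ℤ,
      (bdryTerm q J L u (fun m => φ m (u m)) (n + 1) - B (n + 1))
        - (bdryTerm q J L u (fun m => φ m (u m)) n - B n) = 0)
    ∧ ∃ c : ℝ, ∀ n : ℤ, bdryTerm q J L u (fun m => φ m (u m)) n - B n = c :=
  difference_noether_general q J L u φ B hsym hEL
end

section
/- (General solution of the first invariantized Euler–Lagrange equation of the scaling-invariant Lagrangian.) Let κ : ℤ → ℝ satisfy κ(n) > 1 for all n ∈ ℤ. Then κ satisfies the difference equation (κ(n−1) − 1)^{3/2} − (κ(n) − 1)^{−3/2} = 0 for all n ∈ ℤ if and only if there exists a real constant k₁ > 0 such that κ(n) = 1 + k₁^{2·(−1)^n} for all n ∈ ℤ. -/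
/-!
Since `x ↦ x ^ (3/2)` is injective on `(0, ∞)`, the equation says exactly that
`(κ(n-1) - 1) (κ(n) - 1) = 1`. So `κ - 1` alternates between `c = κ(0) - 1` and `c⁻¹`,
i.e. `κ(n) - 1 = c ^ (-1)^n`, and `k₁ = √c`.
-/

namespace Real

lemma rpow_eq_rpow_neg_iff {a b p : ℝ} (ha : 0 ≤ a) (hb : 0 ≤ b) (hp : p ≠ 0) :
    a ^ p = b ^ (-p) ↔ a = b⁻¹ := by
  rw [rpow_neg hb, ← inv_rpow hb, rpow_left_inj ha (inv_nonneg.2 hb) hp]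

lemma forall_eq_inv_sub_one_iff_eq_rpow_neg_one_zpow {u : ℤ → ℝ} (h₀ : 0 ≤ u 0) :
    (∀ n, u n = (u (n - 1))⁻¹) ↔ ∀ n, u n = u 0 ^ ((-1 : ℝ) ^ n) := by
  have hstep (n : ℤ) : u 0 ^ ((-1 : ℝ) ^ (n + 1)) = (u 0 ^ ((-1 : ℝ) ^ n))⁻¹ := by
    rw [zpow_add_one₀ (by norm_num), mul_neg_one, rpow_neg h₀]
  constructor
  · intro hrec n
    induction n using Int.induction_on with
    | zero => simp
    | succ k ih => rw [hrec, add_sub_cancel_right, ih, hstep]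
    | pred k ih =>
      have hstep' := hstep (-(k : ℤ) - 1)
      rw [sub_add_cancel] at hstep'
      rw [← inv_inv (u _), ← hrec, ih, hstep', inv_inv]
  · intro h n
    rw [h n, h (n - 1), ← hstep, sub_add_cancel]

end Real

open Real

/-- General solution of the first invariantized Euler–Lagrange equation
`(κ_{-1} − 1)^{3/2} − (κ − 1)^{−3/2} = 0` of the scaling-invariant Lagrangian, for `κ > 1`:
the solutions are exactly `κ(n) = 1 + k₁^{2(−1)^n}` with `k₁ > 0`. -/
theorem kappa_general_solution (κ : ℤ → ℝ) (hκ : ∀ n : ℤ, 1 < κ n) :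
    (∀ n : ℤ, (κ (n - 1) - 1) ^ ((3 : ℝ) / 2) - (κ n - 1) ^ (-(3 : ℝ) / 2) = 0) ↔
      ∃ k₁ : ℝ, 0 < k₁ ∧ ∀ n : ℤ, κ n = 1 + k₁ ^ (2 * (-1 : ℝ) ^ n) := by
  have hpos (n : ℤ) : 0 < κ n - 1 := sub_pos.2 (hκ n)
  have hrec : (∀ n : ℤ, (κ (n - 1) - 1) ^ ((3 : ℝ) / 2) - (κ n - 1) ^ (-(3 : ℝ) / 2) = 0) ↔
      ∀ n, κ n - 1 = (κ (n - 1) - 1)⁻¹ := forall_congr' fun n => by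
    rw [sub_eq_zero, neg_div, rpow_eq_rpow_neg_iff (hpos _).le (hpos _).le (by norm_num),
      ← inv_eq_iff_eq_inv, eq_comm]
  rw [hrec, forall_eq_inv_sub_one_iff_eq_rpow_neg_one_zpow (u := fun n => κ n - 1) (hpos 0).le]
  constructor
  · intro h
    refine ⟨√(κ 0 - 1), sqrt_pos.2 (hpos 0), fun n => ?_⟩
    rw [rpow_mul (sqrt_nonneg _), rpow_two, sq_sqrt (hpos 0).le, ← h n]
    ring
  · rintro ⟨k₁, hk₁, h⟩ n
    have h₀ : κ 0 - 1 = k₁ ^ 2 := by simp [h 0]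
    rw [h₀, ← rpow_two, ← rpow_mul hk₁.le, h n]
    ring
end

section
/- (General solution of the second invariantized Euler–Lagrange equation of the scaling-invariant Lagrangian.) Let k₁ > 0 be a real constant and let η : ℤ → ℝ. Then η satisfies the linear difference equation k₁^{3(−1)^{n+1}}·η(n) + (k₁^{3(−1)^n} − k₁^{(−1)^n})·η(n−1) − k₁^{5(−1)^{n+1}}·η(n−2) = 0 for all n ∈ ℤ if and only if there exist real constants k₂, k₃ such that η(n) = k₁^{3(−1)^n}·( k₂·( (n+1)·k₁^{(−1)^{n+1}} − n·k₁^{(−1)^n} ) + k₃·(−1)^n ) for all n ∈ ℤ. -/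
/-!
The recurrence is linear of second order and its leading and trailing coefficients never vanish,
so a solution is determined by its values at two consecutive integers, propagating both upwards
and downwards. The closed form `etaSol k₁ k₂ k₃` solves it: with `t = k₁ ^ (-1) ^ n` every shift by
one replaces `t` by `t⁻¹`, and the recurrence becomes a rational identity in `t`, `n` and `(-1) ^ n`.
Its values at `0` and `-1` depend invertibly on `(k₂, k₃)`, so they can match any solution.
-/

theorem eq_of_secondOrderRecurrence {R : Type*} [Ring R] [NoZeroDivisors R] {a b c f g : ℤ → R}
    (ha : ∀ n, a n ≠ 0) (hc : ∀ n, c n ≠ 0)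
    (hf : ∀ n, a n * f n + b n * f (n - 1) + c n * f (n - 2) = 0)
    (hg : ∀ n, a n * g n + b n * g (n - 1) + c n * g (n - 2) = 0)
    (m : ℤ) (h₀ : f m = g m) (h₁ : f (m - 1) = g (m - 1)) : f = g := by
  suffices h : ∀ n, f n = g n ∧ f (n - 1) = g (n - 1) from funext fun n => (h n).1
  intro n
  induction n using Int.inductionOn' (b := m) with
  | zero => exact ⟨h₀, h₁⟩
  | succ k _ ih =>
    refine ⟨mul_left_cancel₀ (ha (k + 1)) ?_, by simpa using ih.1⟩
    have hfk := hf (k + 1)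
    have hgk := hg (k + 1)
    simp only [add_sub_cancel_right, show k + 1 - 2 = k - 1 by ring, ih.1, ih.2, add_assoc]
      at hfk hgk
    exact add_right_cancel (hfk.trans hgk.symm)
  | pred k _ ih =>
    refine ⟨ih.2, ?_⟩
    rw [sub_sub, one_add_one_eq_two]
    refine mul_left_cancel₀ (hc k) ?_
    have hfk := hf k
    have hgk := hg k
    rw [ih.1, ih.2] at hfk
    exact add_left_cancel (hfk.trans hgk.symm)

lemma rpow_ofNat_mul {x : ℝ} (hx : 0 ≤ x) (c : ℕ) [c.AtLeastTwo] (y : ℝ) :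
    x ^ ((OfNat.ofNat c : ℝ) * y) = (x ^ y) ^ (OfNat.ofNat c : ℕ) := by
  rw [mul_comm, Real.rpow_mul hx, Real.rpow_ofNat]

noncomputable def etaSol (k₁ k₂ k₃ : ℝ) (n : ℤ) : ℝ :=
  k₁ ^ (3 * (-1 : ℝ) ^ n) *
    (k₂ * (((n : ℝ) + 1) * k₁ ^ ((-1 : ℝ) ^ (n + 1)) - (n : ℝ) * k₁ ^ ((-1 : ℝ) ^ n))
      + k₃ * (-1 : ℝ) ^ n)

section
variable {K : Type*} [DivisionRing K]

lemma neg_one_zpow_add_one (n : ℤ) : (-1 : K) ^ (n + 1) = -(-1) ^ n := by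
  rw [zpow_add_one₀ (by simp), mul_neg_one]

lemma neg_one_zpow_sub_one (n : ℤ) : (-1 : K) ^ (n - 1) = -(-1) ^ n := by
  simp [zpow_sub_one₀ (by simp : (-1 : K) ≠ 0)]

end

lemma etaSol_recurrence {k₁ : ℝ} (hk₁ : 0 < k₁) (k₂ k₃ : ℝ) (n : ℤ) :
    k₁ ^ (3 * (-1 : ℝ) ^ (n + 1)) * etaSol k₁ k₂ k₃ n
      + (k₁ ^ (3 * (-1 : ℝ) ^ n) - k₁ ^ ((-1 : ℝ) ^ n)) * etaSol k₁ k₂ k₃ (n - 1)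
      - k₁ ^ (5 * (-1 : ℝ) ^ (n + 1)) * etaSol k₁ k₂ k₃ (n - 2) = 0 := by
  have hn2 : n - 2 = n - 1 - 1 := by ring
  simp only [etaSol, hn2, sub_add_cancel, neg_one_zpow_add_one, neg_one_zpow_sub_one, neg_neg,
    mul_neg, Real.rpow_neg hk₁.le, rpow_ofNat_mul hk₁.le]
  have ht : k₁ ^ (-1 : ℝ) ^ n ≠ 0 := (Real.rpow_pos_of_pos hk₁ _).ne'
  push_cast
  field_simp
  ring

lemma etaSol_zero {k₁ : ℝ} (hk₁ : 0 < k₁) (k₂ k₃ : ℝ) :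
    etaSol k₁ k₂ k₃ 0 = k₁ ^ 2 * k₂ + k₁ ^ 3 * k₃ := by
  norm_num [etaSol, Real.rpow_neg_one]
  field_simp

lemma etaSol_neg_one {k₁ : ℝ} (hk₁ : 0 < k₁) (k₂ k₃ : ℝ) :
    etaSol k₁ k₂ k₃ (-1) = (k₂ - k₁ * k₃) / k₁ ^ 4 := by
  norm_num [etaSol, Real.rpow_neg_one]
  field_simp
  ring

lemma exists_etaSol_zero_neg_one_eq {k₁ : ℝ} (hk₁ : 0 < k₁) (A B : ℝ) :
    ∃ k₂ k₃, etaSol k₁ k₂ k₃ 0 = A ∧ etaSol k₁ k₂ k₃ (-1) = B := by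
  refine ⟨(A / k₁ ^ 2 + B * k₁ ^ 4) / 2, (A / k₁ ^ 3 - B * k₁ ^ 3) / 2, ?_, ?_⟩
  · rw [etaSol_zero hk₁]
    field_simp
    ring
  · rw [etaSol_neg_one hk₁]
    field_simp
    ring

/-- General solution of the second invariantized Euler–Lagrange equation of the
scaling-invariant Lagrangian, after substituting `κ(n) = 1 + k₁^{2(−1)^n}`. -/
theorem eta_general_solution (k₁ : ℝ) (hk₁ : 0 < k₁) (η : ℤ → ℝ) :
    (∀ n : ℤ,
        k₁ ^ (3 * (-1 : ℝ) ^ (n + 1)) * η n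
          + (k₁ ^ (3 * (-1 : ℝ) ^ n) - k₁ ^ ((-1 : ℝ) ^ n)) * η (n - 1)
          - k₁ ^ (5 * (-1 : ℝ) ^ (n + 1)) * η (n - 2) = 0) ↔
      ∃ k₂ k₃ : ℝ, ∀ n : ℤ,
        η n = k₁ ^ (3 * (-1 : ℝ) ^ n) *
          (k₂ * (((n : ℝ) + 1) * k₁ ^ ((-1 : ℝ) ^ (n + 1)) - (n : ℝ) * k₁ ^ ((-1 : ℝ) ^ n))
            + k₃ * (-1 : ℝ) ^ n) := by
  have hpow (x : ℝ) : k₁ ^ x ≠ 0 := (Real.rpow_pos_of_pos hk₁ x).ne'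
  constructor
  · intro hη
    obtain ⟨k₂, k₃, h₀, h₁⟩ := exists_etaSol_zero_neg_one_eq hk₁ (η 0) (η (-1))
    have heq : η = etaSol k₁ k₂ k₃ :=
      eq_of_secondOrderRecurrence (a := fun n => k₁ ^ (3 * (-1 : ℝ) ^ (n + 1)))
        (b := fun n => k₁ ^ (3 * (-1 : ℝ) ^ n) - k₁ ^ ((-1 : ℝ) ^ n))
        (c := fun n => -k₁ ^ (5 * (-1 : ℝ) ^ (n + 1)))
        (fun _ => hpow _) (fun _ => neg_ne_zero.2 (hpow _))
        (fun n => by simpa [sub_eq_add_neg] using hη n)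
        (fun n => by simpa [sub_eq_add_neg] using etaSol_recurrence hk₁ k₂ k₃ n)
        0 h₀.symm (by simpa using h₁.symm)
    exact ⟨k₂, k₃, congrFun heq⟩
  · rintro ⟨k₂, k₃, hη⟩
    obtain rfl : η = etaSol k₁ k₂ k₃ := funext hη
    exact etaSol_recurrence hk₁ k₂ k₃
end
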